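/- arXiv:math/0309460 — 2 statements merged into one kernel-verified Lean document; each statement's English description precedes it below -/
import Mathlib

section
/- If π : X → Y is the blow-up of an n-dimensional Fano manifold Y along a smooth connected center Z such that X is also Fano, then the index r_X of X equals gcd(r_Y, n - dim Z - 1), where r_Y is the index of Y. In particular r_X ≤ r_Y. -/
/-- `r` is the index of a Fano manifold with canonical class `K`:
the largest positive integer `m` such that `-K = m L` for some line bundle `L`. -/
def IsIndex {G : Type*} [AddCommGroup G] (K : G) (r : ℕ) : Prop :=
  0 < r ∧ (∃ L, -K = (r : ℤ) • L) ∧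
    ∀ m : ℕ, 0 < m → (∃ L, -K = (m : ℤ) • L) → m ≤ r

/-- If `x` is both an `a`-multiple and a `b`-multiple in an abelian group,
then it is an `lcm a b`-multiple. -/
lemma exists_lcm_smul {G : Type*} [AddCommGroup G] (x : G) (a b : ℕ)
    (ha : 0 < a) (hb : 0 < b) (u v : G) (hu : x = (a : ℤ) • u) (hv : x = (b : ℤ) • v) :
    ∃ w : G, x = (Nat.lcm a b : ℤ) • w := by
  set d : ℕ := Nat.gcd a b with hd
  have hd0 : 0 < d := Nat.gcd_pos_of_pos_left _ ha
  obtain ⟨a', ha'⟩ : d ∣ a := Nat.gcd_dvd_left a b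
  obtain ⟨b', hb'⟩ : d ∣ b := Nat.gcd_dvd_right a b
  have hlcm : Nat.lcm a b = a' * b := by
    have h := Nat.gcd_mul_lcm a b
    have h2 : d * (a' * b) = a * b := by rw [ha']; ring
    refine (Nat.eq_of_mul_eq_mul_left hd0 ?_).symm
    rw [h2, ← h, hd]
  -- Bezout over ℤ
  have hbez : (d : ℤ) = (a : ℤ) * Int.gcdA (a : ℤ) (b : ℤ) + (b : ℤ) * Int.gcdB (a : ℤ) (b : ℤ) := by
    have := Int.gcd_eq_gcd_ab (a : ℤ) (b : ℤ)
    rwa [Int.gcd_natCast_natCast, ← hd] at this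
  set A := Int.gcdA (a : ℤ) (b : ℤ)
  set B := Int.gcdB (a : ℤ) (b : ℤ)
  have key : (a' : ℤ) * A + (b' : ℤ) * B = 1 := by
    have hda : (a : ℤ) = (d : ℤ) * a' := by exact_mod_cast congrArg (Nat.cast : ℕ → ℤ) ha'
    have hdb : (b : ℤ) = (d : ℤ) * b' := by exact_mod_cast congrArg (Nat.cast : ℕ → ℤ) hb'
    have hd0' : (d : ℤ) ≠ 0 := by exact_mod_cast hd0.ne'
    have : (d : ℤ) * 1 = (d : ℤ) * ((a' : ℤ) * A + (b' : ℤ) * B) := by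
      linear_combination hbez + A * hda + B * hdb
    exact (mul_left_cancel₀ hd0' this).symm
  refine ⟨B • u + A • v, ?_⟩
  have hab : (a' : ℤ) * b = (a : ℤ) * b' := by
    have : a' * b = a * b' := by rw [ha', hb']; ring
    exact_mod_cast this
  calc x = ((a' : ℤ) * A + (b' : ℤ) * B) • x := by rw [key, one_smul]
    _ = ((a' : ℤ) * A) • x + ((b' : ℤ) * B) • x := add_smul _ _ _
    _ = ((a' : ℤ) * A) • ((b : ℤ) • v) + ((b' : ℤ) * B) • ((a : ℤ) • u) := by
        rw [← hu, ← hv]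
    _ = ((a' : ℤ) * A * b) • v + ((b' : ℤ) * B * a) • u := by
        rw [smul_smul, smul_smul]
    _ = ((a' : ℤ) * b) • (B • u + A • v) := by
        have e1 : (a' : ℤ) * A * b = (a' : ℤ) * b * A := by ring
        have e2 : (b' : ℤ) * B * a = (a' : ℤ) * b * B := by rw [hab]; ring
        rw [smul_add, smul_smul, smul_smul, ← e1, ← e2]
        abel
    _ = (Nat.lcm a b : ℤ) • (B • u + A • v) := by
        rw [hlcm]; push_cast; ring_nf
  -- note the calc shows x = lcm • w

/-- If `π : X → Y` is the blow-up of an `n`-dimensional Fano manifold `Y` along a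
smooth connected center `Z` of dimension `dimZ` such that `X` is also Fano, then
`r_X = gcd(r_Y, n - dim Z - 1)`; in particular `r_X ≤ r_Y`.
We model `Pic X ≅ Pic Y ⊕ ℤ·E` (via `H²(X,ℤ) ≅ H²(Y,ℤ) ⊕ ℤ·E`), with
`π* y = (y, 0)`, `E = (0,1)`, and `K_X = π* K_Y + (n - dim Z - 1) E`. -/
theorem index_of_blowup
    (n dimZ : ℕ) (hn : 1 ≤ n) (hZ : dimZ + 1 ≤ n)
    {PicY : Type*} [AddCommGroup PicY]
    (KY : PicY) (KX : PicY × ℤ)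
    (hKX : KX = (KY, (n : ℤ) - dimZ - 1))
    (rX rY : ℕ)
    (hrX : IsIndex KX rX) (hrY : IsIndex KY rY) :
    rX = Nat.gcd rY (n - dimZ - 1) ∧ rX ≤ rY := by
  obtain ⟨hrX0, ⟨L, hL⟩, hrXmax⟩ := hrX
  obtain ⟨hrY0, ⟨LY, hLY⟩, hrYmax⟩ := hrY
  set c : ℕ := n - dimZ - 1 with hc
  have hcZ : ((n : ℤ) - dimZ - 1) = (c : ℤ) := by omega
  -- components of hL
  have h1 : -KY = (rX : ℤ) • L.1 := by
    have := congrArg Prod.fst hL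
    simpa [hKX] using this
  have h2 : -(c : ℤ) = (rX : ℤ) * L.2 := by
    have := congrArg Prod.snd hL
    simpa [hKX, hcZ, smul_eq_mul] using this
  -- rX divides c
  have hrXc : rX ∣ c := by
    have : (rX : ℤ) ∣ (c : ℤ) := ⟨-L.2, by linarith [h2]⟩
    exact_mod_cast this
  -- rX divides rY via the lcm lemma
  have hrXrY : rX ∣ rY := by
    obtain ⟨w, hw⟩ := exists_lcm_smul (-KY) rX rY hrX0 hrY0 L.1 LY h1 hLY
    have hlcm_pos : 0 < Nat.lcm rX rY := Nat.pos_of_ne_zero (Nat.lcm_ne_zero hrX0.ne' hrY0.ne')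
    have hle : Nat.lcm rX rY ≤ rY := hrYmax _ hlcm_pos ⟨w, hw⟩
    have hge : rY ≤ Nat.lcm rX rY := Nat.le_of_dvd hlcm_pos (Nat.dvd_lcm_right _ _)
    have : Nat.lcm rX rY = rY := le_antisymm hle hge
    exact this ▸ Nat.dvd_lcm_left rX rY
  -- gcd rY c is attainable for KX
  set g : ℕ := Nat.gcd rY c with hg
  have hg0 : 0 < g := Nat.gcd_pos_of_pos_left _ hrY0
  obtain ⟨a, ha⟩ : g ∣ rY := Nat.gcd_dvd_left rY c
  obtain ⟨b, hb⟩ : g ∣ c := Nat.gcd_dvd_right rY c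
  have hgmem : ∃ L', -KX = (g : ℤ) • L' := by
    refine ⟨((a : ℤ) • LY, -(b : ℤ)), ?_⟩
    rw [hKX]
    ext
    · show -KY = (g : ℤ) • ((a : ℤ) • LY)
      rw [smul_smul, hLY]
      congr 1
      exact_mod_cast congrArg (Nat.cast : ℕ → ℤ) ha
    · show -((n : ℤ) - dimZ - 1) = (g : ℤ) • (-(b : ℤ))
      rw [hcZ, smul_eq_mul]
      have : (c : ℤ) = (g : ℤ) * b := by exact_mod_cast congrArg (Nat.cast : ℕ → ℤ) hb
      rw [this]; ring
  have hgle : g ≤ rX := hrXmax g hg0 hgmem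
  have hrXg : rX ∣ g := Nat.dvd_gcd hrXrY hrXc
  have hle : rX ≤ g := Nat.le_of_dvd hg0 hrXg
  exact ⟨le_antisymm hle hgle, Nat.le_of_dvd hrY0 hrXrY⟩
end

section
/- For positive integers a, d, r, s, the inequalities min(r-1, s+1, 1+a-d) > min(r+s, 1+a-rd) ≥ 2 and a ≥ rd imply dim ℙ(E) = a + r + s - 1 ≥ 10, and equality forces (a,d,r,s) = (5,1,4,2). -/
/-- Arithmetic optimality claim from §3.2: for positive integers `a, d, r, s`
with `Y = ℙ(O^{⊕r} ⊕ O(d)^{⊕s})` over `ℙ^a` and `X = B_Z(Y)` both Fano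
(`a ≥ rd`), the inequalities `i_X = min(r-1, s+1, 1+a-d) > i_Y = min(r+s, 1+a-rd) ≥ 2`
imply `dim ℙ(E) = a + r + s - 1 ≥ 10`, and equality forces `(a,d,r,s) = (5,1,4,2)`. -/
theorem minimal_dimension_ten
    (a d r s : ℤ) (ha : 1 ≤ a) (hd : 1 ≤ d) (hr : 1 ≤ r) (hs : 1 ≤ s)
    (hgt : min (r + s) (1 + a - r * d) <
      min (r - 1) (min (s + 1) (1 + a - d)))
    (h2 : 2 ≤ min (r + s) (1 + a - r * d))
    (hFano : r * d ≤ a) :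
    10 ≤ a + r + s - 1 ∧
      (a + r + s - 1 = 10 → a = 5 ∧ d = 1 ∧ r = 4 ∧ s = 2) := by
  set P := r * d with hP
  have hPr : r ≤ P := by nlinarith
  have hM1 : min (r + s) (1 + a - P) ≤ r + s := min_le_left _ _
  have hM2 : min (r + s) (1 + a - P) ≤ 1 + a - P := min_le_right _ _
  rw [lt_min_iff, lt_min_iff] at hgt
  obtain ⟨hgr, hgs, hgd⟩ := hgt
  have hcases := min_cases (r + s) (1 + a - P)
  -- derive the key linear facts
  have key : r = 4 ∧ s = 2 ∧ P = 4 → d = 1 := by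
    rintro ⟨hr4, -, hP4⟩
    rw [hr4] at hP
    omega
  constructor
  · omega
  · intro heq
    have h4 : r = 4 ∧ s = 2 ∧ P = 4 := by omega
    have hd1 := key h4
    omega
end
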